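/- Let m ≥ 3 be odd and let d be an integer with gcd(d, 2^m - 1) = 1 such that the power function x ↦ x^d on F = GF(2^m) is maximum nonlinear. Assume that for all α, β ∈ F \ {0} with α ≠ β and all i, j ∈ GF(2) the cardinality |H^{i,j}(α,β) ∩ D_d| belongs to {2^(m-3), 2^(m-3) - 2^((m-3)/2), 2^(m-3) + 2^((m-3)/2)}. Then for every ω ∈ F: Σ_{y ∈ F} (-1)^(tr(y^d + (y+ω)^d)) equals 2^m if ω = 0, equals -2^m if ω = 1, and equals 0 for all ω ∈ F \ {0, 1}. -/

import Mathlib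

/-!
The Walsh spectrum `W(γ) = walsh m d 1 γ` and the autocorrelation
`S(ω) = ∑_y (-1)^tr(y^d + (y+ω)^d)` are related by `∑_γ W(γ)² (-1)^tr(γω) = 2^m S(ω)`.
Since `m` is odd and `x ↦ x^d` is almost bent, `W(γ)² = 2^m (1 - (-1)^σ(γ))` where `σ` is the
indicator of the support of `W`. Expanding `|H^{0,0}(α,β) ∩ D_d|` in characters gives
`2^m - W(α) - W(β) - W(α+β)` (using `W(0) = 0`, as `x ↦ x^d` is a permutation), and the
hypothesis on these counts forces an even number of `W(α), W(β), W(α+β)` to be nonzero, i.e.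
`σ` is additive. Hence `S(ω) = 2^m ([ω = 0] - [σ = tr(ω ·)])`. At most one `ω` satisfies
`σ = tr(ω ·)`, and `S(ω²) = S(ω)` shows that this `ω` is a fixed point of squaring, i.e. `ω = 1`.
Finally `∑_ω S(ω) = (∑_y (-1)^tr(y^d))² = 0`, which forces `S(1) = -2^m`.
-/

attribute [local instance] Classical.propDecidable

noncomputable instance (m : ℕ) : Fintype (GaloisField 2 m) := Fintype.ofFinite _

/-- The absolute trace map from `GF(2^m)` to `GF(2)`. -/
noncomputable def tr (m : ℕ) (x : GaloisField 2 m) : ZMod 2 :=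
  Algebra.trace (ZMod 2) (GaloisField 2 m) x

/-- `(-1)^t` as an integer, for `t ∈ GF(2)`. -/
def chi (t : ZMod 2) : ℤ := (-1) ^ t.val

/-- The Walsh coefficient `∑_{x ∈ F} (-1)^(tr(γx + βx^d))` of the power map `x ↦ x^d`. -/
noncomputable def walsh (m d : ℕ) (β γ : GaloisField 2 m) : ℤ :=
  ∑ x : GaloisField 2 m, chi (tr m (γ * x + β * x ^ d))

/-- The power function `x ↦ x^d` on `GF(2^m)` is maximum nonlinear (almost bent). -/
def MaxNonlinear (m d : ℕ) : Prop :=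
  ∀ β : GaloisField 2 m, β ≠ 0 → ∀ γ : GaloisField 2 m,
    walsh m d β γ ∈ ({0, 2 ^ ((m + 1) / 2), -(2 ^ ((m + 1) / 2))} : Set ℤ)

/-- `D_d = {x ∈ F : tr(x^d) = 1}`. -/
noncomputable def Dd (m d : ℕ) : Finset (GaloisField 2 m) :=
  Finset.univ.filter (fun x => tr m (x ^ d) = 1)

/-- `H^i(α) = {x ∈ F : tr(αx) = i}`. -/
noncomputable def Hi (m : ℕ) (α : GaloisField 2 m) (i : ZMod 2) :
    Finset (GaloisField 2 m) :=
  Finset.univ.filter (fun x => tr m (α * x) = i)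

/-- `H^{i,j}(α,β) = {x ∈ F : tr(αx) = i and tr(βx) = j}`. -/
noncomputable def Hij (m : ℕ) (α β : GaloisField 2 m) (i j : ZMod 2) :
    Finset (GaloisField 2 m) :=
  Finset.univ.filter (fun x => tr m (α * x) = i ∧ tr m (β * x) = j)

open Finset

@[simp] lemma chi_zero : chi 0 = 1 := rfl

@[simp] lemma chi_one : chi 1 = -1 := rfl

lemma chi_add (s t : ZMod 2) : chi (s + t) = chi s * chi t := by decide +revert

lemma sum_chi_addMonoidHom {G : Type*} [AddCommGroup G] [Fintype G] (ρ : G →+ ZMod 2) :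
    ∑ x, chi (ρ x) = if ρ = 0 then (Fintype.card G : ℤ) else 0 := by
  split_ifs with hρ
  · simp [hρ]
  obtain ⟨a, ha⟩ : ∃ a, ρ a ≠ 0 := by
    by_contra! h
    exact hρ (AddMonoidHom.ext h)
  replace ha : ρ a = 1 := by
    generalize ρ a = t at ha
    decide +revert
  -- translating by `a` flips the sign of every term
  have hflip := Fintype.sum_equiv (Equiv.addRight a) (fun x => chi (ρ (x + a)))
    (fun x => chi (ρ x)) fun _ => rfl
  simp only [map_add, ha, chi_add, chi_one, mul_neg_one, sum_neg_distrib] at hflip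
  linarith

lemma FiniteField.pow_bijective_of_coprime {K : Type*} [Field K] [Fintype K] {d : ℕ}
    (hd : d ≠ 0) (hcop : Nat.Coprime d (Fintype.card K - 1)) :
    Function.Bijective fun x : K => x ^ d := by
  have hunits : Function.Bijective fun u : Kˣ => u ^ d := by
    apply Nat.Coprime.pow_left_bijective
    rw [Nat.card_units, Nat.card_eq_fintype_card]
    exact hcop.symm
  rw [← Finite.injective_iff_bijective]
  intro x y hxy
  simp only at hxy
  rcases eq_or_ne x 0 with rfl | hx
  · rw [zero_pow hd, eq_comm, pow_eq_zero_iff hd] at hxy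
    exact hxy.symm
  rcases eq_or_ne y 0 with rfl | hy
  · rwa [zero_pow hd, pow_eq_zero_iff hd] at hxy
  simpa using congrArg Units.val (hunits.1 (a₁ := Units.mk0 x hx) (a₂ := Units.mk0 y hy)
    (Units.ext (by simpa using hxy)))

section GaloisFieldTwo

variable {m : ℕ}

lemma card_galoisField_two (hm : m ≠ 0) : Fintype.card (GaloisField 2 m) = 2 ^ m := by
  rw [← Nat.card_eq_fintype_card, GaloisField.card _ _ hm]

lemma tr_add (x y : GaloisField 2 m) : tr m (x + y) = tr m x + tr m y := map_add _ x y

@[simp] lemma tr_zero : tr m 0 = 0 := map_zero _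

lemma tr_sq (x : GaloisField 2 m) : tr m (x ^ 2) = tr m x := by
  simpa [tr, ZMod.card] using Algebra.trace_eq_of_algEquiv
    (FiniteField.frobeniusAlgEquivOfAlgebraic (ZMod 2) (GaloisField 2 m)) x

noncomputable def trMul (m : ℕ) (z : GaloisField 2 m) : GaloisField 2 m →+ ZMod 2 :=
  (Algebra.trace (ZMod 2) (GaloisField 2 m)).toAddMonoidHom.comp (AddMonoidHom.mulLeft z)

@[simp] lemma trMul_apply (z x : GaloisField 2 m) : trMul m z x = tr m (z * x) := rfl

lemma trMul_injective : Function.Injective (trMul m) := by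
  intro a b hab
  by_contra hne
  obtain ⟨c, hc⟩ := Algebra.trace_surjective (ZMod 2) (GaloisField 2 m) 1
  have h := DFunLike.congr_fun hab ((a - b)⁻¹ * c)
  simp only [trMul_apply, tr] at h
  rw [← sub_eq_zero, ← map_sub, ← sub_mul, ← mul_assoc,
    mul_inv_cancel₀ (sub_ne_zero.mpr hne), one_mul, hc] at h
  exact one_ne_zero h

lemma sum_chi_tr_mul (hm : m ≠ 0) (z : GaloisField 2 m) :
    ∑ x, chi (tr m (z * x)) = if z = 0 then (2 ^ m : ℤ) else 0 := by
  have h := sum_chi_addMonoidHom (trMul m z)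
  simp only [trMul_apply, card_galoisField_two hm] at h
  have h0 : trMul m 0 = 0 := by ext; simp
  rw [h, ← h0, trMul_injective.eq_iff]
  push_cast
  rfl

variable {d : ℕ}

lemma walsh_one_zero : walsh m d 1 0 = ∑ x, chi (tr m (x ^ d)) := by simp [walsh]

lemma sum_chi_tr_pow_eq_zero (hm : m ≠ 0)
    (hbij : Function.Bijective fun x : GaloisField 2 m => x ^ d) :
    ∑ x, chi (tr m (x ^ d)) = 0 := by
  rw [Fintype.sum_bijective _ hbij _ (fun y => chi (tr m y)) fun _ => rfl]
  simpa using sum_chi_tr_mul hm (1 : GaloisField 2 m)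

lemma eight_mul_card_Hij_inter_Dd (hm : m ≠ 0) {α β : GaloisField 2 m} (hα : α ≠ 0)
    (hβ : β ≠ 0) (hαβ : α ≠ β) (i j : ZMod 2) :
    8 * ((Hij m α β i j ∩ Dd m d).card : ℤ) = 2 ^ m - walsh m d 1 0 - chi i * walsh m d 1 α
      - chi j * walsh m d 1 β - chi i * chi j * walsh m d 1 (α + β) := by
  have hαβ : α + β ≠ 0 := by rwa [Ne, CharTwo.add_eq_zero]
  have hchar : ∀ s t u : ZMod 2, 8 * (if s = i ∧ t = j ∧ u = 1 then (1 : ℤ) else 0)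
      = (1 + chi i * chi s + chi j * chi t + chi i * chi j * chi (s + t))
        - (chi u + chi i * chi (s + u) + chi j * chi (t + u) + chi i * chi j * chi (s + t + u)) := by
    decide +revert
  have hpoint : ∀ x : GaloisField 2 m,
      8 * (if tr m (α * x) = i ∧ tr m (β * x) = j ∧ tr m (x ^ d) = 1 then (1 : ℤ) else 0)
        = (1 + chi i * chi (tr m (α * x)) + chi j * chi (tr m (β * x))
            + chi i * chi j * chi (tr m ((α + β) * x)))
          - (chi (tr m (0 * x + 1 * x ^ d)) + chi i * chi (tr m (α * x + 1 * x ^ d))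
            + chi j * chi (tr m (β * x + 1 * x ^ d))
            + chi i * chi j * chi (tr m ((α + β) * x + 1 * x ^ d))) := by
    intro x
    rw [hchar]
    simp only [add_mul, tr_add, zero_mul, one_mul, zero_add]
  have hcard : ((Hij m α β i j ∩ Dd m d).card : ℤ)
      = ∑ x, if tr m (α * x) = i ∧ tr m (β * x) = j ∧ tr m (x ^ d) = 1 then 1 else 0 := by
    simp [Hij, Dd, ← filter_and, and_assoc]
  rw [hcard, mul_sum, Finset.sum_congr rfl fun x _ => hpoint x]
  simp only [walsh, sum_sub_distrib, sum_add_distrib, ← mul_sum, sum_chi_tr_mul hm, if_neg hα,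
    if_neg hβ, if_neg hαβ, sum_const, card_univ, card_galoisField_two hm]
  push_cast [nsmul_one, mul_zero, add_zero]
  ring

lemma eq_zero_iff_eq_zero_iff_of_add_mem {A a b c : ℤ} (hA : 0 < A)
    (ha : a ∈ ({0, A, -A} : Set ℤ)) (hb : b ∈ ({0, A, -A} : Set ℤ))
    (hc : c ∈ ({0, A, -A} : Set ℤ)) (habc : a + b + c ∈ ({0, 2 * A, -(2 * A)} : Set ℤ)) :
    a = 0 ↔ (b = 0 ↔ c = 0) := by
  simp only [Set.mem_insert_iff, Set.mem_singleton_iff] at ha hb hc habc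
  omega

noncomputable def walshSupport (m d : ℕ) (γ : GaloisField 2 m) : ZMod 2 :=
  if walsh m d 1 γ = 0 then 0 else 1

lemma walshSupport_add (hm : 3 ≤ m) (hmax : MaxNonlinear m d) (hW0 : walsh m d 1 0 = 0)
    (hinter : ∀ α β : GaloisField 2 m, α ≠ 0 → β ≠ 0 → α ≠ β →
      ((Hij m α β 0 0 ∩ Dd m d).card : ℤ) ∈
        ({2 ^ (m - 3), 2 ^ (m - 3) - 2 ^ ((m - 3) / 2),
          2 ^ (m - 3) + 2 ^ ((m - 3) / 2)} : Set ℤ)) (a b : GaloisField 2 m) :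
    walshSupport m d (a + b) = walshSupport m d a + walshSupport m d b := by
  have hs0 : walshSupport m d 0 = 0 := by simp [walshSupport, hW0]
  rcases eq_or_ne a 0 with rfl | ha
  · simp [hs0]
  rcases eq_or_ne b 0 with rfl | hb
  · simp [hs0]
  rcases eq_or_ne a b with rfl | hab
  · rw [CharTwo.add_self_eq_zero, CharTwo.add_self_eq_zero, hs0]
  have hiff : walsh m d 1 a = 0 ↔ (walsh m d 1 b = 0 ↔ walsh m d 1 (a + b) = 0) := by
    refine eq_zero_iff_eq_zero_iff_of_add_mem (by positivity) (hmax 1 one_ne_zero a)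
      (hmax 1 one_ne_zero b) (hmax 1 one_ne_zero (a + b)) ?_
    have hcount := eight_mul_card_Hij_inter_Dd (d := d) (by omega) ha hb hab 0 0
    have hN := hinter a b ha hb hab
    simp only [hW0, chi_zero, one_mul] at hcount
    have h8 : (2 : ℤ) ^ m = 8 * 2 ^ (m - 3) := by
      rw [show (8 : ℤ) = 2 ^ 3 by norm_num, ← pow_add, Nat.add_sub_cancel' hm]
    have h4 : (2 : ℤ) ^ ((m + 1) / 2) = 4 * 2 ^ ((m - 3) / 2) := by
      rw [show (4 : ℤ) = 2 ^ 2 by norm_num, ← pow_add]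
      congr 1
      omega
    rw [h8] at hcount
    rw [h4]
    simp only [Set.mem_insert_iff, Set.mem_singleton_iff] at hN ⊢
    generalize (2 : ℤ) ^ (m - 3) = N at *
    generalize (2 : ℤ) ^ ((m - 3) / 2) = E at *
    omega
  unfold walshSupport
  split_ifs <;> simp_all [CharTwo.add_self_eq_zero]

noncomputable def autocorr (m d : ℕ) (ω : GaloisField 2 m) : ℤ :=
  ∑ y, chi (tr m (y ^ d + (y + ω) ^ d))

lemma autocorr_zero (hm : m ≠ 0) : autocorr m d 0 = 2 ^ m := by
  simp [autocorr, CharTwo.add_self_eq_zero, card_galoisField_two hm]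

lemma autocorr_sq (ω : GaloisField 2 m) : autocorr m d (ω ^ 2) = autocorr m d ω := by
  have hpow (z : GaloisField 2 m) : (z ^ 2) ^ d = (z ^ d) ^ 2 := by
    rw [← pow_mul, ← pow_mul, mul_comm]
  refine (Fintype.sum_bijective _ (frobeniusEquiv (GaloisField 2 m) 2).bijective _ _
    fun y => ?_).symm
  simp only [frobeniusEquiv_apply, frobenius_def, ← CharTwo.add_sq, hpow, tr_sq]

lemma sum_autocorr : ∑ ω, autocorr m d ω = (∑ y, chi (tr m (y ^ d))) ^ 2 := by
  unfold autocorr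
  rw [sq, sum_mul_sum, sum_comm]
  refine sum_congr rfl fun y _ => ?_
  rw [Fintype.sum_equiv (Equiv.addLeft y) (fun ω => chi (tr m (y ^ d + (y + ω) ^ d)))
    (fun z => chi (tr m (y ^ d + z ^ d))) fun _ => rfl]
  simp only [tr_add, chi_add]

lemma sum_sq_walsh_mul_chi (hm : m ≠ 0) (ω : GaloisField 2 m) :
    ∑ γ, walsh m d 1 γ ^ 2 * chi (tr m (γ * ω)) = 2 ^ m * autocorr m d ω := by
  calc ∑ γ, walsh m d 1 γ ^ 2 * chi (tr m (γ * ω))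
      = ∑ γ, ∑ x, ∑ y, chi (tr m (x ^ d + y ^ d)) * chi (tr m ((y + (x + ω)) * γ)) := by
        refine sum_congr rfl fun γ _ => ?_
        rw [sq, walsh, sum_mul_sum, sum_mul]
        refine sum_congr rfl fun x _ => ?_
        rw [sum_mul]
        refine sum_congr rfl fun y _ => ?_
        simp only [← chi_add, ← tr_add]
        congr 2
        ring
    _ = ∑ x, ∑ y, chi (tr m (x ^ d + y ^ d)) * ∑ γ, chi (tr m ((y + (x + ω)) * γ)) := by
        rw [sum_comm]
        simp only [mul_sum]
        exact sum_congr rfl fun x _ => sum_comm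
    _ = ∑ x, ∑ y, chi (tr m (x ^ d + y ^ d)) * if y = x + ω then 2 ^ m else 0 := by
        simp only [sum_chi_tr_mul hm, add_eq_zero_iff_eq_neg, CharTwo.neg_eq]
    _ = 2 ^ m * autocorr m d ω := by
        simp [autocorr, mul_sum, mul_comm]

lemma walsh_sq_eq (hmodd : Odd m) (hmax : MaxNonlinear m d) (γ : GaloisField 2 m) :
    walsh m d 1 γ ^ 2 = 2 ^ m * (1 - chi (walshSupport m d γ)) := by
  obtain ⟨k, rfl⟩ := hmodd
  have hsq : ((2 : ℤ) ^ ((2 * k + 1 + 1) / 2)) ^ 2 = 2 ^ (2 * k + 1) * 2 := by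
    rw [← pow_mul, ← pow_succ]
    congr 1
    omega
  unfold walshSupport
  split_ifs with h
  · simp [h]
  rcases hmax 1 one_ne_zero γ with h' | h' | h'
  · exact absurd h' h
  all_goals
    rw [h', chi_one]
    simp only [neg_sq, hsq]
    ring

lemma autocorr_eq (hm : m ≠ 0) (hmodd : Odd m) (hmax : MaxNonlinear m d)
    (σ : GaloisField 2 m →+ ZMod 2) (hσ : ∀ γ, σ γ = walshSupport m d γ) (ω : GaloisField 2 m) :
    autocorr m d ω
      = (if ω = 0 then 2 ^ m else 0) - (if σ + trMul m ω = 0 then 2 ^ m else 0) := by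
  have h := sum_sq_walsh_mul_chi (d := d) hm ω
  have hsplit : ∀ γ, (1 - chi (σ γ)) * chi (tr m (γ * ω))
      = chi (tr m (ω * γ)) - chi ((σ + trMul m ω) γ) := by
    intro γ
    simp only [AddMonoidHom.add_apply, trMul_apply, chi_add, mul_comm γ ω]
    ring
  simp only [walsh_sq_eq hmodd hmax, ← hσ, mul_assoc, ← mul_sum, hsplit, sum_sub_distrib,
    sum_chi_tr_mul hm, sum_chi_addMonoidHom, card_galoisField_two hm] at h
  push_cast at h
  exact (mul_left_cancel₀ (by positivity) h).symm

lemma autocorr_eq_zero_of_ne_zero_of_ne_one {σ : GaloisField 2 m →+ ZMod 2}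
    (hS : ∀ ω, autocorr m d ω
      = (if ω = 0 then 2 ^ m else 0) - (if σ + trMul m ω = 0 then 2 ^ m else 0))
    {ω : GaloisField 2 m} (h0 : ω ≠ 0) (h1 : ω ≠ 1) : autocorr m d ω = 0 := by
  have hω : σ + trMul m ω ≠ 0 := by
    intro hω
    -- `autocorr` is Frobenius invariant, so `ω ^ 2` satisfies the same equation as `ω`
    have hω2 : σ + trMul m (ω ^ 2) = 0 := by
      by_contra hne
      have h := autocorr_sq (d := d) ω
      rw [hS, hS, if_neg (pow_ne_zero 2 h0), if_neg hne, if_neg h0, if_pos hω] at h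
      have : (0 : ℤ) < 2 ^ m := by positivity
      linarith
    have hsq : ω ^ 2 = ω := trMul_injective <| by
      rw [eq_neg_of_add_eq_zero_right hω2, eq_neg_of_add_eq_zero_right hω]
    exact h1 ((mul_eq_left₀ h0).mp (by rwa [← sq]))
  rw [hS, if_neg h0, if_neg hω, sub_zero]

end GaloisFieldTwo

/-- Under the hypotheses of the main theorem, the autocorrelation-type sum
`∑_y (-1)^(tr(y^d + (y+ω)^d))` equals `2^m` for `ω = 0`, `-2^m` for `ω = 1`, and `0`
otherwise. -/
theorem stmt10 (m : ℕ) (hm3 : 3 ≤ m) (hmodd : Odd m) (d : ℕ)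
    (hgcd : Nat.gcd d (2 ^ m - 1) = 1) (hmax : MaxNonlinear m d)
    (hinter : ∀ α β : GaloisField 2 m, α ≠ 0 → β ≠ 0 → α ≠ β → ∀ i j : ZMod 2,
      ((Hij m α β i j ∩ Dd m d).card : ℤ) ∈
        ({2 ^ (m - 3), 2 ^ (m - 3) - 2 ^ ((m - 3) / 2),
          2 ^ (m - 3) + 2 ^ ((m - 3) / 2)} : Set ℤ)) :
    ∀ ω : GaloisField 2 m,
      (ω = 0 → (∑ y : GaloisField 2 m, chi (tr m (y ^ d + (y + ω) ^ d))) = 2 ^ m) ∧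
      (ω = 1 → (∑ y : GaloisField 2 m, chi (tr m (y ^ d + (y + ω) ^ d))) = -(2 ^ m)) ∧
      (ω ≠ 0 → ω ≠ 1 →
        (∑ y : GaloisField 2 m, chi (tr m (y ^ d + (y + ω) ^ d))) = 0) := by
  have hm0 : m ≠ 0 := by omega
  have hd0 : d ≠ 0 := by
    rintro rfl
    have : 2 ^ 3 ≤ 2 ^ m := Nat.pow_le_pow_right two_pos hm3
    simp only [Nat.gcd_zero_left] at hgcd
    omega
  have hpow : ∑ x, chi (tr m (x ^ d)) = 0 := sum_chi_tr_pow_eq_zero hm0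
    (FiniteField.pow_bijective_of_coprime hd0 (by rwa [card_galoisField_two hm0]))
  let σ := AddMonoidHom.mk' (walshSupport m d) (walshSupport_add hm3 hmax
    (walsh_one_zero.trans hpow) fun α β hα hβ hαβ => hinter α β hα hβ hαβ 0 0)
  have hS := autocorr_eq hm0 hmodd hmax σ fun _ => rfl
  have hother (ω : GaloisField 2 m) := autocorr_eq_zero_of_ne_zero_of_ne_one hS (ω := ω)
  have hone : autocorr m d 1 = -2 ^ m := by
    have h := sum_autocorr (m := m) (d := d)
    rw [hpow, Fintype.sum_eq_add 0 1 zero_ne_one fun ω h => hother ω h.1 h.2,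
      autocorr_zero hm0] at h
    linarith
  intro ω
  refine ⟨?_, ?_, hother ω⟩
  · rintro rfl
    exact autocorr_zero hm0
  · rintro rfl
    exact hone
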